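/- For F ∈ 𝓗₊ ∪ 𝓗₋ and real numbers a ≥ 1, b ≥ 1, one has a·Γ_{F^#}^{(a-1,b)} = b·Γ_F^{(b-1,a)}, where F^#(x,y) := F(y,x) and Γ_F^{(i,j)} := ∫₀^∞ t^i (T_F(t))^j dt. -/

import Mathlib

open MeasureTheory Filter Set Real
open scoped Classical

/-- The class 𝓗₊. -/
def HPlus (F : ℝ → ℝ → ℝ) : Prop :=
  ContinuousOn (fun p : ℝ × ℝ => F p.1 p.2) {p | 0 < p.1 ∧ 0 < p.2} ∧
  (∀ x y, 0 < x → 0 < y → 0 < F x y) ∧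
  (∀ x x' y y', 0 < x → 0 < y → x ≤ x' → y ≤ y' → F x y ≤ F x' y') ∧
  (∀ a x y, 0 < a → 0 < x → 0 < y → F (a * x) (a * y) = a * F x y) ∧
  (∀ x y, 0 < x → 0 < y → max x y ≤ F x y) ∧
  (∀ y, 0 < y →
    Tendsto (fun x => F x y) (nhdsWithin 0 (Set.Ioi 0)) (nhds y) ∧
    Tendsto (fun x => F y x) (nhdsWithin 0 (Set.Ioi 0)) (nhds y))

/-- The class 𝓗₋. -/
def HMinus (F : ℝ → ℝ → ℝ) : Prop :=
  ContinuousOn (fun p : ℝ × ℝ => F p.1 p.2) {p | 0 < p.1 ∧ 0 < p.2} ∧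
  (∀ x y, 0 < x → 0 < y → 0 < F x y) ∧
  (∀ x x' y y', 0 < x → 0 < y → x ≤ x' → y ≤ y' → F x y ≤ F x' y') ∧
  (∀ a x y, 0 < a → 0 < x → 0 < y → F (a * x) (a * y) = a * F x y) ∧
  (∀ x y, 0 < x → 0 < y → F x y ≤ min x y) ∧
  (∀ y, 0 < y →
    Tendsto (fun x => F x y) atTop (nhds y) ∧
    Tendsto (fun x => F y x) atTop (nhds y))

/-- The associated element F* of 𝓗₊. -/
noncomputable def Fstar (F : ℝ → ℝ → ℝ) : ℝ → ℝ → ℝ :=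
  if HPlus F then F else fun x y => (F x⁻¹ y⁻¹)⁻¹

/-- T_F(t) := sup { z : F*(e^{-t}, e^{-z}) ≥ 1 }. -/
noncomputable def TF (F : ℝ → ℝ → ℝ) (t : ℝ) : ℝ :=
  sSup {z : ℝ | 1 ≤ Fstar F (Real.exp (-t)) (Real.exp (-z))}

/-- T_F^-(t) := inf { z : F*(e^{-t}, e^{-z}) ≤ 1 }. -/
noncomputable def TFminus (F : ℝ → ℝ → ℝ) (t : ℝ) : ℝ :=
  sInf {z : ℝ | Fstar F (Real.exp (-t)) (Real.exp (-z)) ≤ 1}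

/-- r_F := log F*(1,1). -/
noncomputable def rF (F : ℝ → ℝ → ℝ) : ℝ := Real.log (Fstar F 1 1)

/-- Γ_F^{(a,b)} := ∫₀^∞ t^a (T_F(t))^b dt, as an extended nonnegative real. -/
noncomputable def Gamma (F : ℝ → ℝ → ℝ) (a b : ℝ) : ENNReal :=
  ∫⁻ t in Set.Ioi (0 : ℝ), ENNReal.ofReal (t ^ a * (TF F t) ^ b)

/-- F^#(x,y) := F(y,x). -/
def Fsharp (F : ℝ → ℝ → ℝ) : ℝ → ℝ → ℝ := fun x y => F y x

/-! Layer cake with respect to the measure `t^(a-1) dt` on `(0, ∞)` writes `a·Γ_{F^#}^{(a-1,b)}`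
as `b ∫₀^∞ s^(b-1) μ{t | s ≤ T_{F^#}(t)} ds`. The duality `s < T_{F^#}(t) → t ≤ T_F(s)` and
`t < T_F(s) → s ≤ T_{F^#}(t)` squeezes that superlevel set between `(0, T_F(s))` and
`(0, T_F(s)]` at every continuity point `s` of the antitone function `T_F`, i.e. for almost
every `s`, so its measure is `T_F(s)^a / a`. -/

open Topology

section GeneralizedInverse

lemma measure_eq_measure_Ioo_of_subset {μ : Measure ℝ} (hμ : μ ≪ volume.restrict (Ioi 0))
    {S : Set ℝ} {c : ℝ} (hIoo : Ioo 0 c ⊆ S) (hIic : S ∩ Ioi 0 ⊆ Iic c) :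
    μ S = μ (Ioo 0 c) := by
  have hnull : μ ({c} ∪ (Ioi 0)ᶜ) = 0 := by
    apply hμ
    rw [Measure.restrict_apply (measurableSet_singleton c |>.union measurableSet_Ioi.compl),
      union_inter_distrib_right, compl_inter_self, union_empty]
    exact measure_mono_null inter_subset_left Real.volume_singleton
  have hS : S ⊆ Ioo 0 c ∪ ({c} ∪ (Ioi 0)ᶜ) := by
    intro t ht
    by_cases ht0 : 0 < t
    · rcases (show t ≤ c from hIic ⟨ht, ht0⟩).lt_or_eq with htc | rfl
      · exact Or.inl ⟨ht0, htc⟩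
      · exact Or.inr (Or.inl rfl)
    · exact Or.inr (Or.inr ht0)
  refine le_antisymm ?_ (measure_mono hIoo)
  calc μ S ≤ μ (Ioo 0 c) + μ ({c} ∪ (Ioi 0)ᶜ) := (measure_mono hS).trans (measure_union_le _ _)
    _ = μ (Ioo 0 c) := by rw [hnull, add_zero]

lemma withDensity_rpow_Ioo {a c : ℝ} (ha : 0 < a) (hc : 0 ≤ c) :
    (volume.restrict (Ioi 0)).withDensity (fun t => ENNReal.ofReal (t ^ (a - 1))) (Ioo 0 c) =
      ENNReal.ofReal (c ^ a / a) := by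
  have hint : IntegrableOn (fun t : ℝ => t ^ (a - 1)) (Ioo 0 c) :=
    (intervalIntegral.intervalIntegrable_rpow' (by linarith)).1.mono_set Ioo_subset_Ioc_self
  have hnn : 0 ≤ᵐ[volume.restrict (Ioo 0 c)] fun t : ℝ => t ^ (a - 1) := by
    filter_upwards [self_mem_ae_restrict measurableSet_Ioo] with t ht
    exact Real.rpow_nonneg ht.1.le _
  rw [withDensity_apply _ measurableSet_Ioo, Measure.restrict_restrict measurableSet_Ioo,
    inter_eq_left.mpr Ioo_subset_Ioi_self, ← ofReal_integral_eq_lintegral_ofReal hint hnn,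
    ← integral_Ioc_eq_integral_Ioo, ← intervalIntegral.integral_of_le hc,
    integral_rpow (Or.inl (by linarith)), sub_add_cancel, Real.zero_rpow ha.ne', sub_zero]

variable {f g : ℝ → ℝ}

lemma inter_Ioi_subset_Iic_of_continuousAt
    (hfg : ∀ t s, 0 < t → 0 < s → s < f t → t ≤ g s) {s : ℝ} (hs : 0 < s)
    (hg : ContinuousAt g s) : {t | s ≤ f t} ∩ Ioi 0 ⊆ Iic (g s) := by
  rintro t ⟨hst, ht⟩
  refine ge_of_tendsto (hg.tendsto.mono_left (nhdsWithin_le_nhds (s := Iio s))) ?_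
  filter_upwards [Ioo_mem_nhdsLT hs] with y hy
  exact hfg t y ht hy.1 (hy.2.trans_le hst)

theorem lintegral_rpow_mul_rpow_eq_of_antitone_inverse {a b : ℝ} (ha : 0 < a) (hb : 0 < b)
    (hf_nonneg : ∀ t, 0 < t → 0 ≤ f t) (hf : AntitoneOn f (Ioi 0))
    (hg_nonneg : ∀ s, 0 < s → 0 ≤ g s) (hg : AntitoneOn g (Ioi 0))
    (hfg : ∀ t s, 0 < t → 0 < s → s < f t → t ≤ g s)
    (hgf : ∀ t s, 0 < t → 0 < s → t < g s → s ≤ f t) :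
    ENNReal.ofReal a * ∫⁻ t in Ioi 0, ENNReal.ofReal (t ^ (a - 1) * f t ^ b) =
      ENNReal.ofReal b * ∫⁻ s in Ioi 0, ENNReal.ofReal (s ^ (b - 1) * g s ^ a) := by
  set μ := (volume.restrict (Ioi 0)).withDensity (fun t : ℝ => ENNReal.ofReal (t ^ (a - 1)))
  have hμ : μ ≪ volume.restrict (Ioi 0) := withDensity_absolutelyContinuous _ _
  have hpos : ∀ᵐ t : ℝ ∂volume.restrict (Ioi 0), 0 < t := ae_restrict_mem measurableSet_Ioi
  have hLHS : ∫⁻ t in Ioi 0, ENNReal.ofReal (t ^ (a - 1) * f t ^ b) =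
      ∫⁻ t, ENNReal.ofReal (f t ^ b) ∂μ := by
    rw [lintegral_withDensity_eq_lintegral_mul_non_measurable _ (by fun_prop)
      (ae_of_all _ fun _ => ENNReal.ofReal_lt_top)]
    refine lintegral_congr_ae (hpos.mono fun t ht => ?_)
    exact ENNReal.ofReal_mul (Real.rpow_nonneg ht.le _)
  have hlayer := lintegral_rpow_eq_lintegral_meas_le_mul μ
    (hμ.ae_le (hpos.mono hf_nonneg))
    ((aemeasurable_restrict_of_antitoneOn measurableSet_Ioi hf).mono_ac hμ) hb
  have hcont : ∀ᵐ s ∂volume.restrict (Ioi 0), ContinuousAt g s := by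
    rw [ae_restrict_iff' measurableSet_Ioi]
    filter_upwards [hg.countable_not_continuousWithinAt.ae_notMem volume] with s hs hs0
    exact (not_not.mp fun h => hs ⟨hs0, h⟩).continuousAt (Ioi_mem_nhds hs0)
  have hlevel : ∀ᵐ s ∂volume.restrict (Ioi 0),
      ENNReal.ofReal a * (μ {t | s ≤ f t} * ENNReal.ofReal (s ^ (b - 1))) =
        ENNReal.ofReal (s ^ (b - 1) * g s ^ a) := by
    filter_upwards [hpos, hcont] with s hs hgs
    have hsub : Ioo 0 (g s) ⊆ {t | s ≤ f t} := fun t ht => hgf t s ht.1 hs ht.2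
    rw [measure_eq_measure_Ioo_of_subset hμ hsub
        (inter_Ioi_subset_Iic_of_continuousAt hfg hs hgs),
      withDensity_rpow_Ioo ha (hg_nonneg s hs), ← mul_assoc,
      ← ENNReal.ofReal_mul ha.le, mul_div_cancel₀ _ ha.ne',
      ← ENNReal.ofReal_mul (Real.rpow_nonneg (hg_nonneg s hs) a), mul_comm]
  rw [hLHS, hlayer, mul_left_comm, ← lintegral_const_mul' _ _ ENNReal.ofReal_ne_top,
    lintegral_congr_ae hlevel]

end GeneralizedInverse

section Classes

variable {F : ℝ → ℝ → ℝ}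

lemma HPlus.fsharp (hF : HPlus F) : HPlus (Fsharp F) := by
  obtain ⟨hc, hpos, hmono, hhom, hmax, hlim⟩ := hF
  refine ⟨?_, fun x y hx hy => hpos y x hy hx,
    fun x x' y y' hx hy hxx hyy => hmono y y' x x' hy hx hyy hxx,
    fun a x y ha hx hy => hhom a y x ha hy hx,
    fun x y hx hy => max_comm x y ▸ hmax y x hy hx,
    fun y hy => (hlim y hy).symm⟩
  exact hc.comp continuous_swap.continuousOn fun p hp => ⟨hp.2, hp.1⟩

lemma HPlus.mono (hF : HPlus F) {x x' y y' : ℝ} (hx : 0 < x) (hy : 0 < y) (hxx : x ≤ x')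
    (hyy : y ≤ y') : F x y ≤ F x' y' :=
  hF.2.2.1 x x' y y' hx hy hxx hyy

lemma HMinus.not_hPlus (hF : HMinus F) : ¬ HPlus F := by
  intro hP
  have h₁ := hP.2.2.2.2.1 1 2 one_pos two_pos
  have h₂ := hF.2.2.2.2.1 1 2 one_pos two_pos
  rw [max_eq_right one_le_two] at h₁
  rw [min_eq_left one_le_two] at h₂
  linarith

lemma HMinus.hPlus_inv (hF : HMinus F) : HPlus fun x y => (F x⁻¹ y⁻¹)⁻¹ := by
  obtain ⟨hc, hpos, hmono, hhom, hmin, hlim⟩ := hF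
  have hpos' : ∀ x y : ℝ, 0 < x → 0 < y → 0 < F x⁻¹ y⁻¹ := fun x y hx hy =>
    hpos _ _ (inv_pos.mpr hx) (inv_pos.mpr hy)
  have hlim' : ∀ y : ℝ, 0 < y → ∀ φ : ℝ → ℝ, Tendsto φ atTop (𝓝 y⁻¹) →
      Tendsto (fun x => (φ x⁻¹)⁻¹) (𝓝[>] 0) (𝓝 y) := fun y hy φ hφ => by
    simpa using (hφ.comp tendsto_inv_nhdsGT_zero).inv₀ (inv_pos.mpr hy).ne'
  refine ⟨?_, fun x y hx hy => inv_pos.mpr (hpos' x y hx hy), ?_, ?_, ?_,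
    fun y hy => ⟨hlim' y hy _ (hlim y⁻¹ (inv_pos.mpr hy)).1,
      hlim' y hy _ (hlim y⁻¹ (inv_pos.mpr hy)).2⟩⟩
  · refine ContinuousOn.inv₀ ?_ fun p hp => (hpos' _ _ hp.1 hp.2).ne'
    refine hc.comp (f := fun p : ℝ × ℝ => (p.1⁻¹, p.2⁻¹)) ?_
      fun p hp => ⟨inv_pos.mpr hp.1, inv_pos.mpr hp.2⟩
    exact (continuousOn_fst.inv₀ fun p hp => hp.1.ne').prodMk
      (continuousOn_snd.inv₀ fun p hp => hp.2.ne')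
  · intro x x' y y' hx hy hxx hyy
    have hx' := hx.trans_le hxx
    have hy' := hy.trans_le hyy
    exact inv_anti₀ (hpos' x' y' hx' hy') (hmono _ _ _ _ (inv_pos.mpr hx') (inv_pos.mpr hy')
      (inv_anti₀ hx hxx) (inv_anti₀ hy hyy))
  · intro c x y hc hx hy
    simp only [mul_inv]
    rw [hhom _ _ _ (inv_pos.mpr hc) (inv_pos.mpr hx) (inv_pos.mpr hy), mul_inv, inv_inv]
  · intro x y hx hy
    have h := hmin _ _ (inv_pos.mpr hx) (inv_pos.mpr hy)
    exact max_le ((le_inv_comm₀ hx (hpos' x y hx hy)).mpr (h.trans (min_le_left _ _)))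
      ((le_inv_comm₀ hy (hpos' x y hx hy)).mpr (h.trans (min_le_right _ _)))

lemma HPlus.fstar_eq (hF : HPlus F) : Fstar F = F := if_pos hF

lemma HMinus.fstar_eq (hF : HMinus F) : Fstar F = fun x y => (F x⁻¹ y⁻¹)⁻¹ :=
  if_neg hF.not_hPlus

lemma hPlus_fstar (hF : HPlus F ∨ HMinus F) : HPlus (Fstar F) := by
  rcases hF with hF | hF
  · rwa [hF.fstar_eq]
  · rw [hF.fstar_eq]
    exact hF.hPlus_inv

lemma fstar_fsharp (hF : HPlus F ∨ HMinus F) : Fstar (Fsharp F) = Fsharp (Fstar F) := by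
  rcases hF with hF | hF
  · rw [hF.fstar_eq, hF.fsharp.fstar_eq]
  · have hF' : ¬ HPlus (Fsharp F) := fun h => hF.not_hPlus h.fsharp
    rw [hF.fstar_eq, Fstar, if_neg hF']
    rfl

lemma hPlus_fstar_fsharp (hF : HPlus F ∨ HMinus F) : HPlus (Fstar (Fsharp F)) :=
  fstar_fsharp hF ▸ (hPlus_fstar hF).fsharp

end Classes

section TF

variable {F : ℝ → ℝ → ℝ}

lemma bddAbove_TF_set (hG : HPlus (Fstar F)) {t : ℝ} (ht : 0 < t) :
    BddAbove {z | 1 ≤ Fstar F (Real.exp (-t)) (Real.exp (-z))} := by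
  have hlim : Tendsto (fun z => Fstar F (Real.exp (-t)) (Real.exp (-z))) atTop
      (𝓝 (Real.exp (-t))) :=
    (hG.2.2.2.2.2 _ (Real.exp_pos _)).2.comp
      (Real.tendsto_exp_atBot_nhdsGT.comp tendsto_neg_atTop_atBot)
  obtain ⟨z₀, hz₀⟩ :=
    eventually_atTop.mp (hlim.eventually_lt_const (Real.exp_lt_one_iff.mpr (neg_lt_zero.mpr ht)))
  exact ⟨z₀, fun z hz => le_of_not_gt fun hz₀z => (hz₀ z hz₀z.le).not_ge hz⟩

lemma one_le_fstar_exp_neg_zero (hG : HPlus (Fstar F)) (t : ℝ) :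
    1 ≤ Fstar F (Real.exp (-t)) (Real.exp (-0)) := by
  simpa using (le_max_right _ _).trans (hG.2.2.2.2.1 _ 1 (Real.exp_pos (-t)) one_pos)

lemma le_TF (hG : HPlus (Fstar F)) {t z : ℝ} (ht : 0 < t)
    (h : 1 ≤ Fstar F (Real.exp (-t)) (Real.exp (-z))) : z ≤ TF F t :=
  le_csSup (bddAbove_TF_set hG ht) h

lemma one_le_fstar_of_lt_TF (hG : HPlus (Fstar F)) {t z : ℝ} (h : z < TF F t) :
    1 ≤ Fstar F (Real.exp (-t)) (Real.exp (-z)) := by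
  obtain ⟨z', hz', hzz'⟩ := exists_lt_of_lt_csSup ⟨0, one_le_fstar_exp_neg_zero hG t⟩ h
  exact hz'.trans (hG.mono (Real.exp_pos _) (Real.exp_pos _) le_rfl
    (Real.exp_le_exp.mpr (neg_le_neg hzz'.le)))

lemma TF_nonneg (hG : HPlus (Fstar F)) {t : ℝ} (ht : 0 < t) : 0 ≤ TF F t :=
  le_TF hG ht (one_le_fstar_exp_neg_zero hG t)

lemma TF_antitoneOn (hG : HPlus (Fstar F)) : AntitoneOn (TF F) (Ioi 0) :=
  fun _ hs _ _ hst => le_of_forall_lt_imp_le_of_dense fun _ hz =>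
    le_TF hG hs ((one_le_fstar_of_lt_TF hG hz).trans (hG.mono (Real.exp_pos _)
      (Real.exp_pos _) (Real.exp_le_exp.mpr (neg_le_neg hst)) le_rfl))

lemma le_TF_of_lt_TF_fsharp (hF : HPlus F ∨ HMinus F) {t y : ℝ} (hy : 0 < y)
    (h : y < TF (Fsharp F) t) : t ≤ TF F y := by
  have h₁ := one_le_fstar_of_lt_TF (hPlus_fstar_fsharp hF) h
  rw [fstar_fsharp hF] at h₁
  exact le_TF (hPlus_fstar hF) hy h₁

lemma le_TF_fsharp_of_lt_TF (hF : HPlus F ∨ HMinus F) {t y : ℝ} (ht : 0 < t)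
    (h : t < TF F y) : y ≤ TF (Fsharp F) t := by
  refine le_TF (hPlus_fstar_fsharp hF) ht ?_
  rw [fstar_fsharp hF]
  exact one_le_fstar_of_lt_TF (hPlus_fstar hF) h

end TF

/-- For a ≥ 1, b ≥ 1: a·Γ_{F^#}^{(a-1,b)} = b·Γ_F^{(b-1,a)}. -/
theorem stmt9 (F : ℝ → ℝ → ℝ) (hF : HPlus F ∨ HMinus F) (a b : ℝ)
    (ha : 1 ≤ a) (hb : 1 ≤ b) :
    ENNReal.ofReal a * Gamma (Fsharp F) (a - 1) b =
      ENNReal.ofReal b * Gamma F (b - 1) a := by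
  have hG : HPlus (Fstar F) := hPlus_fstar hF
  have hG' : HPlus (Fstar (Fsharp F)) := hPlus_fstar_fsharp hF
  exact lintegral_rpow_mul_rpow_eq_of_antitone_inverse (by linarith) (by linarith)
    (fun _ => TF_nonneg hG') (TF_antitoneOn hG') (fun _ => TF_nonneg hG) (TF_antitoneOn hG)
    (fun _ _ _ hs => le_TF_of_lt_TF_fsharp hF hs) (fun _ _ ht _ => le_TF_fsharp_of_lt_TF hF ht)
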